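/- For the family BD(\gamma,d) with d \geq 3 and any \gamma > 0, the series \sum_{n=1}^{\infty} \prod_{j=1}^{n} \mu_j(\gamma,d)/\lambda_j(\gamma,d) converges (the process is transient), while for d = 2 it diverges (the process is null-recurrent). -/

import Mathlib

/-!
The birth rates are the death rates shifted by one, `λ_n = μ_{n+1}`: this is Pascal's rule for
`C(n, i - 1)` together with `(i + 1) C(d, i + 1) = (d - i) C(d, i)`. Hence the product telescopes to
`μ_1 / μ_{n+1}`. For `d ≥ 3` the `i = 3` term makes `μ_{n+1}` grow quadratically in `n`, so the
series converges; for `d = 2` we have `μ_{n+1} = 2γ(1 + γn)`, a harmonic series.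
-/

open Finset

/-- Birth rates of the family `BD(γ,d)`. -/
noncomputable def bdLambda (γ : ℝ) (d n : ℕ) : ℝ :=
  (∑ i ∈ Finset.Icc 1 d, (i : ℝ) * γ ^ i * (d.choose i) * ((n - 1).choose (i - 1)))
    + γ * ∑ i ∈ Finset.Icc 1 (d - 1),
        ((d : ℝ) - i) * γ ^ i * (d.choose i) * ((n - 1).choose (i - 1))

/-- Death rates of the family `BD(γ,d)`. -/
noncomputable def bdMu (γ : ℝ) (d n : ℕ) : ℝ :=
  ∑ i ∈ Finset.Icc 1 d, (i : ℝ) * γ ^ i * (d.choose i) * ((n - 1).choose (i - 1))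

theorem Finset.sum_Icc_one_eq_sum_range {M : Type*} [AddCommMonoid M] (f : ℕ → M) (m : ℕ) :
    ∑ i ∈ Icc 1 m, f i = ∑ k ∈ range m, f (k + 1) := by
  rw [← Ico_add_one_right_eq_Icc, sum_Ico_eq_sum_range]
  simp [add_comm]

theorem Nat.cast_succ_mul_choose_succ (d k : ℕ) :
    ((k : ℝ) + 1) * d.choose (k + 1) = ((d : ℝ) - k) * d.choose k := by
  rcases le_or_gt k d with hk | hk
  · rw [← Nat.cast_sub hk, mul_comm, mul_comm ((d - k : ℕ) : ℝ)]
    exact_mod_cast Nat.choose_succ_right_eq d k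
  · simp [Nat.choose_eq_zero_of_lt hk, Nat.choose_eq_zero_of_lt (hk.trans k.lt_succ_self)]

theorem sum_range_succ_mul_choose_succ (a : ℕ → ℝ) (e n : ℕ) :
    ∑ k ∈ range (e + 1), a (k + 1) * (n + 1).choose k
      = ∑ k ∈ range (e + 1), a (k + 1) * n.choose k + ∑ k ∈ range e, a (k + 2) * n.choose k := by
  simp only [sum_range_succ' _ e, Nat.choose_succ_succ, Nat.choose_zero_right, Nat.cast_add,
    mul_add, sum_add_distrib]
  ring

theorem bdLambda_add_one (γ : ℝ) (d n : ℕ) : bdLambda γ d (n + 1) = bdMu γ d (n + 2) := by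
  rcases d with _ | e
  · simp [bdLambda, bdMu]
  have shift : ∀ k : ℕ,
      γ * ((((e + 1 : ℕ) : ℝ) - (k + 1 : ℕ)) * γ ^ (k + 1) * (e + 1).choose (k + 1))
        = (k + 2 : ℕ) * γ ^ (k + 2) * (e + 1).choose (k + 2) := by
    intro k
    have := Nat.cast_succ_mul_choose_succ (e + 1) (k + 1)
    push_cast at this ⊢
    linear_combination (-γ ^ (k + 2)) * this
  have pascal := sum_range_succ_mul_choose_succ (fun i => i * γ ^ i * (e + 1).choose i) e n
  simp only [bdLambda, bdMu, sum_Icc_one_eq_sum_range, Nat.add_sub_cancel, Nat.reduceSubDiff,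
    mul_sum] at pascal ⊢
  rw [pascal]
  congr 1
  exact sum_congr rfl fun k _ => by linear_combination (n.choose k : ℝ) * shift k

theorem bdMu_pos {γ : ℝ} (hγ : 0 < γ) {d : ℕ} (hd : 1 ≤ d) (n : ℕ) : 0 < bdMu γ d n := by
  refine sum_pos' (fun i _ => by positivity) ⟨1, mem_Icc.2 ⟨le_rfl, hd⟩, ?_⟩
  simpa using mul_pos hγ (Nat.cast_pos.2 hd)

theorem prod_bdMu_div_bdLambda {γ : ℝ} (hγ : 0 < γ) {d : ℕ} (hd : 1 ≤ d) (n : ℕ) :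
    ∏ j ∈ Icc 1 n, bdMu γ d j / bdLambda γ d j = bdMu γ d 1 / bdMu γ d (n + 1) := by
  induction n with
  | zero => simp [div_self (bdMu_pos hγ hd 1).ne']
  | succ k ih =>
    rw [prod_Icc_succ_top (by omega), ih, bdLambda_add_one]
    have := (bdMu_pos hγ hd (k + 1)).ne'
    field_simp

theorem bdMu_two_add_one (γ : ℝ) (n : ℕ) : bdMu γ 2 (n + 1) = 2 * γ * (1 + γ * n) := by
  simp only [bdMu, sum_Icc_one_eq_sum_range, sum_range_succ, sum_range_zero]
  norm_num
  ring

theorem prod_bdMu_div_bdLambda_two {γ : ℝ} (hγ : 0 < γ) (n : ℕ) :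
    ∏ j ∈ Icc 1 n, bdMu γ 2 j / bdLambda γ 2 j = 1 / (1 + γ * n) := by
  rw [prod_bdMu_div_bdLambda hγ one_le_two,
    show bdMu γ 2 1 = 2 * γ by simpa using bdMu_two_add_one γ 0, bdMu_two_add_one]
  have : 0 < 1 + γ * n := by positivity
  field_simp

theorem sq_mul_le_bdMu {γ : ℝ} (hγ : 0 ≤ γ) {d : ℕ} (hd : 3 ≤ d) (n : ℕ) :
    3 / 2 * γ ^ 3 * d.choose 3 * ((n : ℝ) + 1) ^ 2 ≤ bdMu γ d (n + 3) := by
  have hterm : (3 : ℝ) * γ ^ 3 * d.choose 3 * (n + 2).choose 2 ≤ bdMu γ d (n + 3) :=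
    single_le_sum (f := fun i : ℕ => (i : ℝ) * γ ^ i * d.choose i * (n + 3 - 1).choose (i - 1))
      (fun i _ => by positivity) (mem_Icc.2 ⟨by norm_num, hd⟩)
  have hchoose : ((n : ℝ) + 1) ^ 2 ≤ 2 * (n + 2).choose 2 := by
    rw [Nat.cast_choose_two]
    push_cast
    nlinarith [n.cast_nonneg (α := ℝ)]
  calc 3 / 2 * γ ^ 3 * d.choose 3 * ((n : ℝ) + 1) ^ 2
      ≤ 3 / 2 * γ ^ 3 * d.choose 3 * (2 * (n + 2).choose 2) := by gcongr
    _ = 3 * γ ^ 3 * d.choose 3 * (n + 2).choose 2 := by ring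
    _ ≤ bdMu γ d (n + 3) := hterm

theorem not_summable_one_div_one_add_mul {c : ℝ} (hc : 0 < c) :
    ¬ Summable fun n : ℕ => 1 / (1 + c * n) := by
  intro h
  refine lt_irrefl (1 : ℝ) ((Real.summable_one_div_nat_add_rpow c⁻¹ 1).1 ((h.mul_left c).congr
    fun n => ?_))
  rw [Real.rpow_one, abs_of_pos (by positivity)]
  field_simp
  ring

theorem summable_div_bdMu_add_one {γ : ℝ} (hγ : 0 < γ) {d : ℕ} (hd : 3 ≤ d) (C : ℝ) :
    Summable fun n : ℕ => C / bdMu γ d (n + 1) := by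
  rw [← summable_nat_add_iff 2]
  set K := 3 / 2 * γ ^ 3 * d.choose 3
  have hK : 0 < K := by have := Nat.choose_pos hd; positivity
  have hpow : Summable fun n : ℕ => 1 / ((n : ℝ) + 1) ^ 2 := by
    simpa using (summable_nat_add_iff 1).2 (Real.summable_one_div_nat_pow.2 one_lt_two)
  refine Summable.of_norm_bounded (hpow.mul_left (|C| / K)) fun n => ?_
  have hμ := sq_mul_le_bdMu hγ.le hd n
  have hpos : 0 < K * ((n : ℝ) + 1) ^ 2 := by positivity
  calc ‖C / bdMu γ d (n + 2 + 1)‖ = |C| / bdMu γ d (n + 3) := by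
        rw [Real.norm_eq_abs, abs_div, abs_of_pos (hpos.trans_le hμ)]
    _ ≤ |C| / (K * ((n : ℝ) + 1) ^ 2) := by gcongr
    _ = |C| / K * (1 / ((n : ℝ) + 1) ^ 2) := by rw [div_mul_div_comm, mul_one]

/-- For `BD(γ,d)`: if `d ≥ 3` the series `∑_n ∏_{j=1}^n μ_j/λ_j` converges
(transience), while for `d = 2` it diverges (null recurrence). -/
theorem stmt_15 (γ : ℝ) (hγ : 0 < γ) (d : ℕ) :
    (3 ≤ d → Summable (fun n : ℕ => ∏ j ∈ Finset.Icc 1 n, bdMu γ d j / bdLambda γ d j)) ∧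
    (d = 2 → ¬ Summable (fun n : ℕ => ∏ j ∈ Finset.Icc 1 n, bdMu γ d j / bdLambda γ d j)) := by
  refine ⟨fun hd => ?_, fun hd => ?_⟩
  · simp_rw [prod_bdMu_div_bdLambda hγ (by omega : 1 ≤ d)]
    exact summable_div_bdMu_add_one hγ hd _
  · subst hd
    simpa only [prod_bdMu_div_bdLambda_two hγ] using not_summable_one_div_one_add_mul hγ
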